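/- arXiv:1605.09749 — 3 statements merged into one kernel-verified Lean document; each statement's English description precedes it below -/
import Mathlib

section
/- For every positive integer k, every matroid M, every collection of bases B₁, …, B_k of M, and every subset A₁ ⊆ B₁, there exist subsets A₂ ⊆ B₂, …, A_k ⊆ B_k such that for every i (indices taken cyclically modulo k, so that the index i−1 for i = 1 means k), the set (B_i \ A_i) ∪ A_{i−1} is a basis of M. That is, all the sets obtained by cyclically shifting the sets A_i by one position are bases. -/
/-!
For two bases this is the multiple symmetric exchange property of Greene and Magnanti: for
`A₁ ⊆ B₁` there is `A₂ ⊆ B₂` with `(B₁ \ A₁) ∪ A₂` and `(B₂ \ A₂) ∪ A₁` bases, and moreover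
`A₂ ∩ B₁ = A₁ ∩ B₂`. It follows from Edmonds' partition theorem for two contractions of `M`,
applied to `B₂ \ B₁`, whose rank condition reduces to submodularity of the rank.

For `k` bases, exchange `A₀` between `B₀` and `B₁`, replace `B₀` by the base `(B₀ \ A₀) ∪ A₁`
and recurse on the `k - 1` bases obtained, starting from `A₁`. Since `A₁ ∩ B₀ ⊆ A₀`, removing
`A₁` from the new base gives back `B₀ \ A₀`, which closes the cycle.
-/

open Set

namespace Matroid

variable {α : Type*} {M : Matroid α} {B I S T X Y : Set α} {e : α}

-- Junk value `0` on sets of infinite rank, hence the `M.RankFinite` assumptions below.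
noncomputable def rk (M : Matroid α) (X : Set α) : ℕ := (M.eRk X).toNat

lemma Indep.rk_eq_ncard (hI : M.Indep I) : M.rk I = I.ncard := by
  rw [rk, hI.eRk_eq_encard, ncard_def]

lemma cast_rk (M : Matroid α) [M.RankFinite] (X : Set α) : (M.rk X : ℕ∞) = M.eRk X :=
  ENat.natCast_toNat (eRk_ne_top_iff.2 (M.isRkFinite_set X))

section RankFinite

variable [M.RankFinite]

lemma rk_mono (h : X ⊆ Y) : M.rk X ≤ M.rk Y :=
  ENat.toNat_le_toNat (M.eRk_mono h) (eRk_ne_top_iff.2 (M.isRkFinite_set Y))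

lemma rk_insert_le_add_one (e : α) (X : Set α) : M.rk (insert e X) ≤ M.rk X + 1 := by
  have h := M.eRk_insert_le_add_one e X
  rw [← cast_rk, ← cast_rk] at h
  exact_mod_cast h

lemma rk_inter_add_rk_union_le (X Y : Set α) :
    M.rk (X ∩ Y) + M.rk (X ∪ Y) ≤ M.rk X + M.rk Y := by
  have h := M.eRk_inter_add_eRk_union_le X Y
  simp only [← cast_rk] at h
  exact_mod_cast h

lemma indep_of_rk_eq_ncard (hI : I.Finite) (h : M.rk I = I.ncard) : M.Indep I := by
  rw [indep_iff_eRk_eq_encard_of_finite hI, ← cast_rk, h, hI.cast_ncard_eq]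

lemma rk_insert_le_of_subset (hST : S ⊆ T) (h : M.rk (insert e S) ≤ M.rk S) :
    M.rk (insert e T) ≤ M.rk T := by
  have hsub := M.rk_inter_add_rk_union_le (insert e S) T
  rw [insert_union, union_eq_self_of_subset_left hST] at hsub
  have hS : M.rk S ≤ M.rk (insert e S ∩ T) := rk_mono (subset_inter (subset_insert e S) hST)
  omega

lemma Indep.ncard_le_of_isBase (hI : M.Indep I) (hB : M.IsBase B) : I.ncard ≤ B.ncard := by
  obtain ⟨B', hB', hIB'⟩ := hI.exists_isBase_superset
  exact (ncard_le_ncard hIB' hB'.finite).trans_eq (hB'.ncard_eq_ncard_of_isBase hB)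

lemma Indep.isBase_of_ncard_le (hI : M.Indep I) (hB : M.IsBase B) (h : B.ncard ≤ I.ncard) :
    M.IsBase I := by
  obtain ⟨B', hB', hIB'⟩ := hI.exists_isBase_superset
  rwa [eq_of_subset_of_ncard_le hIB' ((hB'.ncard_eq_ncard_of_isBase hB).trans_le h) hB'.finite]

end RankFinite

section Partition

/- A set `Z ⊆ W` is *tight* when the hypothesis
`Z.ncard + Y.ncard + X.ncard ≤ M₁.rk (Y ∪ Z) + M₂.rk (X ∪ Z)` of `exists_partition_indep`
holds with equality. -/

variable {M₁ M₂ : Matroid α} {W Z₁ Z₂ : Set α}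

lemma rk_add_rk_union_le_of_tight [M₁.RankFinite] [M₂.RankFinite]
    (h : ∀ Z ⊆ W, Z.ncard + Y.ncard + X.ncard ≤ M₁.rk (Y ∪ Z) + M₂.rk (X ∪ Z))
    (hW : W.Finite) (hZ₁ : Z₁ ⊆ W) (hZ₂ : Z₂ ⊆ W)
    (htight₁ : M₁.rk (Y ∪ Z₁) + M₂.rk (X ∪ Z₁) ≤ Z₁.ncard + Y.ncard + X.ncard)
    (htight₂ : M₁.rk (Y ∪ Z₂) + M₂.rk (X ∪ Z₂) ≤ Z₂.ncard + Y.ncard + X.ncard) :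
    M₁.rk (Y ∪ (Z₁ ∪ Z₂)) + M₂.rk (X ∪ (Z₁ ∪ Z₂)) ≤ (Z₁ ∪ Z₂).ncard + Y.ncard + X.ncard := by
  have hsub₁ := M₁.rk_inter_add_rk_union_le (Y ∪ Z₁) (Y ∪ Z₂)
  have hsub₂ := M₂.rk_inter_add_rk_union_le (X ∪ Z₁) (X ∪ Z₂)
  rw [← union_inter_distrib_left, ← union_union_distrib_left] at hsub₁ hsub₂
  have hinter := h (Z₁ ∩ Z₂) (inter_subset_left.trans hZ₁)
  have hcard := ncard_union_add_ncard_inter Z₁ Z₂ (hW.subset hZ₁) (hW.subset hZ₂)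
  omega

lemma exists_tight_spanning_of_not_insert [M₂.RankFinite] (hY : M₁.Indep Y) (hX : M₂.Indep X)
    (heX : e ∉ X) (hfail : ¬ (M₂.Indep (insert e X) ∧ ∀ Z ⊆ W,
      Z.ncard + Y.ncard + (insert e X).ncard ≤ M₁.rk (Y ∪ Z) + M₂.rk (insert e X ∪ Z))) :
    ∃ Z ⊆ W, M₁.rk (Y ∪ Z) + M₂.rk (insert e (X ∪ Z)) ≤ Z.ncard + Y.ncard + X.ncard := by
  by_cases hXe : M₂.Indep (insert e X)
  · simp only [hXe, true_and, not_forall, not_le] at hfail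
    obtain ⟨Z, hZW, hZ⟩ := hfail
    rw [ncard_insert_of_notMem heX hX.finite, insert_union] at hZ
    exact ⟨Z, hZW, by omega⟩
  · refine ⟨∅, empty_subset W, ?_⟩
    have hle := M₂.rk_insert_le_add_one e X
    have hne : M₂.rk (insert e X) ≠ X.ncard + 1 := fun heq => hXe <|
      indep_of_rk_eq_ncard (hX.finite.insert e) (by rwa [ncard_insert_of_notMem heX hX.finite])
    simp only [union_empty, ncard_empty, hY.rk_eq_ncard, hX.rk_eq_ncard] at hle ⊢
    omega

lemma rk_add_rk_insert_union_lt [M₁.RankFinite] [M₂.RankFinite] (hW : W.Finite) (he : e ∉ W)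
    (h : ∀ Z ⊆ W, Z.ncard + Y.ncard + X.ncard ≤ M₁.rk (Y ∪ Z) + M₂.rk (X ∪ Z))
    (hZ₁W : Z₁ ⊆ W) (hZ₂W : Z₂ ⊆ W)
    (hZ₁ : M₁.rk (Y ∪ Z₁) + M₂.rk (insert e (X ∪ Z₁)) ≤ Z₁.ncard + Y.ncard + X.ncard)
    (hZ₂ : M₁.rk (insert e (Y ∪ Z₂)) + M₂.rk (X ∪ Z₂) ≤ Z₂.ncard + Y.ncard + X.ncard) :
    M₁.rk (Y ∪ insert e (Z₁ ∪ Z₂)) + M₂.rk (X ∪ insert e (Z₁ ∪ Z₂)) <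
      (insert e (Z₁ ∪ Z₂)).ncard + Y.ncard + X.ncard := by
  have hZ₁X := h Z₁ hZ₁W
  have hZ₂Y := h Z₂ hZ₂W
  have hmono₁ := M₁.rk_mono (subset_insert e (Y ∪ Z₂))
  have hmono₂ := M₂.rk_mono (subset_insert e (X ∪ Z₁))
  have htight := rk_add_rk_union_le_of_tight h hW hZ₁W hZ₂W (by omega) (by omega)
  have hspan₁ : M₁.rk (insert e (Y ∪ (Z₁ ∪ Z₂))) ≤ M₁.rk (Y ∪ (Z₁ ∪ Z₂)) :=
    rk_insert_le_of_subset (union_subset_union_right Y subset_union_right) (by omega)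
  have hspan₂ : M₂.rk (insert e (X ∪ (Z₁ ∪ Z₂))) ≤ M₂.rk (X ∪ (Z₁ ∪ Z₂)) :=
    rk_insert_le_of_subset (union_subset_union_right X subset_union_left) (by omega)
  have heZ : e ∉ Z₁ ∪ Z₂ := fun he' => he (union_subset hZ₁W hZ₂W he')
  rw [ncard_insert_of_notMem heZ ((hW.subset hZ₁W).union (hW.subset hZ₂W)), union_insert,
    union_insert]
  omega

/-- Edmonds' partition theorem for two matroids, relative to independent sets `Y` and `X`
(i.e. for the contractions `M₁ ／ Y` and `M₂ ／ X`). -/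
theorem exists_partition_indep [M₁.RankFinite] [M₂.RankFinite] (hW : W.Finite)
    (hY : M₁.Indep Y) (hX : M₂.Indep X) (hWY : Disjoint W Y) (hWX : Disjoint W X)
    (h : ∀ Z ⊆ W, Z.ncard + Y.ncard + X.ncard ≤ M₁.rk (Y ∪ Z) + M₂.rk (X ∪ Z)) :
    ∃ P ⊆ W, M₁.Indep (Y ∪ P) ∧ M₂.Indep (X ∪ (W \ P)) := by
  -- Give `e` to the `X` side, or else to the `Y` side, if the hypothesis survives. If both fail,
  -- there are tight sets on whose respective sides `e` is spanned, and by submodularity their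
  -- union is tight and spans `e` on both sides, which the hypothesis forbids.
  induction W, hW using Set.Finite.induction_on generalizing X Y with
  | empty => exact ⟨∅, empty_subset _, by simpa using hY, by simpa using hX⟩
  | @insert e W heW hW ih =>
    have heY : e ∉ Y := disjoint_left.1 hWY (mem_insert e W)
    have heX : e ∉ X := disjoint_left.1 hWX (mem_insert e W)
    have hWY' : Disjoint W Y := hWY.mono_left (subset_insert e W)
    have hWX' : Disjoint W X := hWX.mono_left (subset_insert e W)
    by_cases hXside : M₂.Indep (insert e X) ∧ ∀ Z ⊆ W,
        Z.ncard + Y.ncard + (insert e X).ncard ≤ M₁.rk (Y ∪ Z) + M₂.rk (insert e X ∪ Z)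
    · obtain ⟨P, hPW, hYP, hXP⟩ := ih hY hXside.1 hWY'
        (disjoint_insert_right.2 ⟨heW, hWX'⟩) hXside.2
      refine ⟨P, hPW.trans (subset_insert e W), hYP, ?_⟩
      rwa [insert_sdiff_of_notMem _ (fun heP => heW (hPW heP)), union_insert, ← insert_union]
    by_cases hYside : M₁.Indep (insert e Y) ∧ ∀ Z ⊆ W,
        Z.ncard + (insert e Y).ncard + X.ncard ≤ M₁.rk (insert e Y ∪ Z) + M₂.rk (X ∪ Z)
    · obtain ⟨P, hPW, hYP, hXP⟩ := ih hYside.1 hX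
        (disjoint_insert_right.2 ⟨heW, hWY'⟩) hWX' hYside.2
      refine ⟨insert e P, insert_subset_insert hPW, by rwa [union_insert, ← insert_union], ?_⟩
      rwa [insert_sdiff_of_mem _ (mem_insert e P), sdiff_insert_of_notMem heW]
    obtain ⟨Z₁, hZ₁W, hZ₁⟩ := exists_tight_spanning_of_not_insert hY hX heX hXside
    obtain ⟨Z₂, hZ₂W, hZ₂⟩ := exists_tight_spanning_of_not_insert (W := W) hX hY heY
      fun ⟨hYe, hcond⟩ => hYside ⟨hYe, fun Z hZ => by have := hcond Z hZ; omega⟩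
    exact absurd (h _ (insert_subset_insert (union_subset hZ₁W hZ₂W))) <| not_le.2 <|
      rk_add_rk_insert_union_lt hW heW (fun Z hZ => h Z (hZ.trans (subset_insert e W))) hZ₁W hZ₂W hZ₁
        (by omega)

end Partition


section Exchange

variable [M.RankFinite] {A₁ B₁ B₂ S₁ S₂ Z : Set α}

lemma ncard_add_le_rk_add_rk (hYX : M.Indep (Y ∪ X)) (hZ : M.Indep ((Y ∩ X) ∪ Z))
    (hdisj : Disjoint Z (Y ∩ X)) :
    Z.ncard + Y.ncard + X.ncard ≤ M.rk (Y ∪ Z) + M.rk (X ∪ Z) := by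
  have hsub := M.rk_inter_add_rk_union_le (Y ∪ Z) (X ∪ Z)
  rw [← inter_union_distrib_right, ← union_union_distrib_right, hZ.rk_eq_ncard,
    ncard_union_eq hdisj.symm (hZ.finite.subset subset_union_left)
      (hZ.finite.subset subset_union_right)] at hsub
  have hmono := M.rk_mono (subset_union_left (s := Y ∪ X) (t := Z))
  rw [hYX.rk_eq_ncard] at hmono
  have hcard := ncard_union_add_ncard_inter Y X (hYX.finite.subset subset_union_left)
    (hYX.finite.subset subset_union_right)
  omega

lemma IsBase.isBase_and_isBase_of_union_eq_of_inter_eq (hB₁ : M.IsBase B₁) (hB₂ : M.IsBase B₂)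
    (hS₁ : M.Indep S₁) (hS₂ : M.Indep S₂) (hunion : S₁ ∪ S₂ = B₁ ∪ B₂)
    (hinter : S₁ ∩ S₂ = B₁ ∩ B₂) : M.IsBase S₁ ∧ M.IsBase S₂ := by
  have hcard := ncard_union_add_ncard_inter S₁ S₂ hS₁.finite hS₂.finite
  rw [hunion, hinter, ncard_union_add_ncard_inter B₁ B₂ hB₁.finite hB₂.finite,
    hB₁.ncard_eq_ncard_of_isBase hB₂] at hcard
  have h₁ := hS₁.ncard_le_of_isBase hB₂
  have h₂ := hS₂.ncard_le_of_isBase hB₂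
  exact ⟨hS₁.isBase_of_ncard_le hB₂ (by omega), hS₂.isBase_of_ncard_le hB₂ (by omega)⟩

theorem IsBase.exists_multiple_symm_exchange (hB₁ : M.IsBase B₁) (hB₂ : M.IsBase B₂)
    (hA₁ : A₁ ⊆ B₁) :
    ∃ A₂ ⊆ B₂, A₂ ∩ B₁ = A₁ ∩ B₂ ∧
      M.IsBase ((B₁ \ A₁) ∪ A₂) ∧ M.IsBase ((B₂ \ A₂) ∪ A₁) := by
  -- `A₂` is forced on `B₁ ∩ B₂`: it contains `A₁ ∩ B₂` and avoids `B₁ \ A₁`. So only `B₂ \ B₁` is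
  -- distributed, between the side of `B₁ \ A₁` and that of `A₁`; `B₁ ∩ B₂` counts on both sides.
  have hinter : (B₁ \ (A₁ \ B₂)) ∩ (A₁ ∪ B₁ ∩ B₂) ⊆ B₂ := by tauto_set
  obtain ⟨P, hPW, hYP, hXP⟩ := exists_partition_indep (M₁ := M) (M₂ := M)
    (W := B₂ \ B₁) hB₂.finite.sdiff (hB₁.indep.subset sdiff_subset)
    (hB₁.indep.subset (union_subset hA₁ inter_subset_left))
    (disjoint_sdiff_left.mono_right sdiff_subset)
    (disjoint_sdiff_left.mono_right (union_subset hA₁ inter_subset_left))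
    fun Z hZ => ncard_add_le_rk_add_rk
      (hB₁.indep.subset (union_subset sdiff_subset (union_subset hA₁ inter_subset_left)))
      (hB₂.indep.subset (union_subset hinter (hZ.trans sdiff_subset)))
      ((disjoint_sdiff_left.mono_left hZ).mono_right (inter_subset_left.trans sdiff_subset))
  refine ⟨P ∪ (A₁ ∩ B₂), union_subset (hPW.trans sdiff_subset) inter_subset_right,
    by tauto_set, ?_⟩
  rw [show (B₁ \ A₁) ∪ (P ∪ (A₁ ∩ B₂)) = (B₁ \ (A₁ \ B₂)) ∪ P by tauto_set,
    show (B₂ \ (P ∪ (A₁ ∩ B₂))) ∪ A₁ = (A₁ ∪ B₁ ∩ B₂) ∪ ((B₂ \ B₁) \ P) by tauto_set]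
  exact hB₁.isBase_and_isBase_of_union_eq_of_inter_eq hB₂ hYP hXP (by tauto_set) (by tauto_set)

end Exchange

lemma exists_cyclic_exchange_nat [M.RankFinite] (n : ℕ) (B : ℕ → Set α)
    (hB : ∀ i ≤ n, M.IsBase (B i)) (A₀ : Set α) (hA₀ : A₀ ⊆ B 0) :
    ∃ A : ℕ → Set α, A 0 = A₀ ∧ (∀ i ≤ n, A i ⊆ B i) ∧
      (∀ i < n, M.IsBase ((B (i + 1) \ A (i + 1)) ∪ A i)) ∧ M.IsBase ((B 0 \ A 0) ∪ A n) := by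
  induction n generalizing B A₀ with
  | zero =>
    refine ⟨fun _ => A₀, rfl, fun i hi => ?_, fun i hi => absurd hi (Nat.not_lt_zero i), ?_⟩
    · rwa [Nat.le_zero.1 hi]
    · simpa only [sdiff_union_of_subset hA₀] using hB 0 le_rfl
  | succ n ih =>
    obtain ⟨A₁, hA₁B, hcap, hbase₀, hbase₁⟩ :=
      (hB 0 (Nat.zero_le _)).exists_multiple_symm_exchange (hB 1 (by omega)) hA₀
    obtain ⟨A, hA0, hAB, hchain, hwrap⟩ :=
      ih (fun | 0 => (B 0 \ A₀) ∪ A₁ | i + 1 => B (i + 2))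
        (by rintro (_ | i) hi; exacts [hbase₀, hB _ (by omega)]) A₁ subset_union_right
    refine ⟨fun | 0 => A₀ | i + 1 => A i, rfl, ?_, ?_, ?_⟩
    · rintro (_ | _ | i) hi
      exacts [hA₀, by simpa [hA0] using hA₁B, hAB (i + 1) (by omega)]
    · rintro (_ | i) hi
      exacts [by simpa [hA0] using hbase₁, hchain i (by omega)]
    · have hdiff : ((B 0 \ A₀) ∪ A₁) \ A₁ = B 0 \ A₀ := by
        rw [union_sdiff_right, sdiff_eq_left]
        exact disjoint_left.2 fun x hx hxA₁ => hx.2 (hcap.subset ⟨hxA₁, hx.1⟩).1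
      simpa only [hA0, hdiff] using hwrap

end Matroid

/-- **Multiple cyclic exchange property.**
For every positive integer `k`, every (finite) matroid `M`, every collection of bases
`B 0, …, B (k-1)` of `M`, and every subset `A₁ ⊆ B 0`, there exist subsets
`A i ⊆ B i` with `A 0 = A₁` such that for every `i` (indices cyclic mod `k`),
the set `(B i \ A i) ∪ A (i-1)` is a basis of `M`. -/
theorem multiple_cyclic_exchange {α : Type*} {k : ℕ} [NeZero k]
    (M : Matroid α) (hM : M.Finite)
    (B : Fin k → Set α) (hB : ∀ i, M.IsBase (B i))
    (A₁ : Set α) (hA₁ : A₁ ⊆ B 0) :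
    ∃ A : Fin k → Set α, A 0 = A₁ ∧ (∀ i, A i ⊆ B i) ∧
      ∀ i : Fin k, M.IsBase ((B i \ A i) ∪ A (i - 1)) := by
  obtain ⟨n, rfl⟩ := Nat.exists_eq_add_one_of_ne_zero (NeZero.ne k)
  set C : ℕ → Set α := fun i => if h : i < n + 1 then B ⟨i, h⟩ else ∅
  have hC (i : Fin (n + 1)) : C i = B i := dif_pos i.isLt
  obtain ⟨A, hA0, hAB, hchain, hwrap⟩ := Matroid.exists_cyclic_exchange_nat n C
    (fun i hi => hC ⟨i, by omega⟩ ▸ hB _) A₁ (hC 0 ▸ hA₁)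
  refine ⟨fun i => A i, hA0, fun i => hC i ▸ hAB i (by omega), fun i => ?_⟩
  dsimp only
  rw [← hC i, Fin.coe_sub_one]
  split_ifs with hi
  · subst hi
    simpa [hA0] using hwrap
  · obtain ⟨m, hm⟩ := Nat.exists_eq_add_one_of_ne_zero (Fin.val_ne_zero_iff.2 hi)
    simpa only [hm, Nat.add_sub_cancel] using hchain m (by omega)
end

section
/- (Single-element cyclic exchange property.) For every positive integer k, every matroid M, every collection of bases B₁, …, B_k of M, and every element e₁ ∈ B₁, there exist elements e₂ ∈ B₂, …, e_k ∈ B_k such that for every i (indices taken cyclically modulo k), the set (B_i \ {e_i}) ∪ {e_{i−1}} is a basis of M. -/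
/-!
By the symmetric exchange property, for bases `A`, `B` and `e ∈ A` there is `f ∈ B` such that
both `A - e + f` and `B - f + e` are bases. Fix `I = B₁ - e₁` and walk around the cycle: while
`I + eᵢ` is a basis, a symmetric exchange of `eᵢ` between `I + eᵢ` and `Bᵢ₊₁` yields `eᵢ₊₁ ∈ Bᵢ₊₁`
with `Bᵢ₊₁ - eᵢ₊₁ + eᵢ` and `I + eᵢ₊₁` bases. After `k - 1` steps, `I + e_k = B₁ - e₁ + e_k` is
the basis that closes the cycle.
-/

open Set

namespace Matroid

variable {α : Type*} {M : Matroid α}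

theorem IsBase.symm_exchange {A B : Set α} {e : α} (hA : M.IsBase A) (hB : M.IsBase B)
    (he : e ∈ A) :
    ∃ f ∈ B, M.IsBase (insert f (A \ {e})) ∧ M.IsBase (insert e (B \ {f})) := by
  by_cases heB : e ∈ B
  · refine ⟨e, heB, ?_, ?_⟩
    · rwa [insert_sdiff_singleton, insert_eq_of_mem he]
    · rwa [insert_sdiff_singleton, insert_eq_of_mem heB]
  have heE : e ∈ M.E := hA.subset_ground he
  -- `f` is taken from the meet of the fundamental circuit of `e` in `B` and the fundamental
  -- cocircuit of `e` for `A`, which cannot be `{e}` alone.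
  obtain ⟨f, ⟨hfC, hfK⟩, hfe⟩ :=
    ((hB.fundCircuit_isCircuit heE heB).isCocircuit_inter_nontrivial
      (fundCocircuit_isCocircuit he hA)
      ⟨e, M.mem_fundCircuit e B, M.mem_fundCocircuit e A⟩).exists_ne e
  have hfB : f ∈ B := by simpa [hfe] using M.fundCircuit_subset_insert e B hfC
  have hfA : f ∉ A := ((M.fundCocircuit_subset_insert_compl e A hfK).resolve_left hfe).2
  refine ⟨f, hfB, ?_, ?_⟩
  · rw [insert_sdiff_singleton_comm hfe]
    refine hA.exchange_isBase_of_indep' he hfA ?_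
    rwa [hA.mem_fundCocircuit_iff_mem_fundCircuit,
      hA.indep.mem_fundCircuit_iff (by rw [hA.closure_eq]; exact hB.subset_ground hfB) hfA] at hfK
  · rw [insert_sdiff_singleton_comm hfe.symm]
    refine hB.exchange_isBase_of_indep' hfB heB ?_
    rwa [hB.indep.mem_fundCircuit_iff (by rw [hB.closure_eq]; exact heE) heB] at hfC

theorem exists_exchange_seq {I : Set α} {x₀ : α} (h₀ : M.IsBase (insert x₀ I)) (hx₀ : x₀ ∉ I)
    (B : ℕ → Set α) (hB : ∀ n, M.IsBase (B n)) :
    ∃ x : ℕ → α, x 0 = x₀ ∧ ∀ n, M.IsBase (insert (x n) I) ∧ x (n + 1) ∈ B (n + 1) ∧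
      M.IsBase (insert (x n) (B (n + 1) \ {x (n + 1)})) := by
  let P : α → Prop := fun x ↦ M.IsBase (insert x I) ∧ x ∉ I
  have step : ∀ n (x : Subtype P), ∃ y : Subtype P, y.1 ∈ B n ∧
      M.IsBase (insert x.1 (B n \ {y.1})) := by
    rintro n ⟨x, hxI, hx⟩
    obtain ⟨y, hyB, hyI, hxB⟩ := hxI.symm_exchange (hB n) (mem_insert x I)
    rw [insert_sdiff_self_of_notMem hx] at hyI
    have hy : y ∉ I := by
      intro hy
      rw [insert_eq_of_mem hy] at hyI
      exact hx (hyI.eq_of_subset_isBase hxI (subset_insert x I) ▸ mem_insert x I)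
    exact ⟨⟨y, hyI, hy⟩, hyB, hxB⟩
  choose next hnext using step
  let x : ℕ → Subtype P := fun n ↦ Nat.rec ⟨x₀, h₀, hx₀⟩ (fun n y ↦ next (n + 1) y) n
  exact ⟨fun n ↦ (x n).1, rfl, fun n ↦ ⟨(x n).2.1, hnext (n + 1) (x n)⟩⟩

end Matroid

open Matroid Fin.NatCast

theorem single_cyclic_exchange_general {α : Type*} {k : ℕ} [NeZero k]
    (M : Matroid α)
    (B : Fin k → Set α) (hB : ∀ i, M.IsBase (B i))
    (e₁ : α) (he₁ : e₁ ∈ B 0) :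
    ∃ e : Fin k → α, e 0 = e₁ ∧ (∀ i, e i ∈ B i) ∧
      ∀ i : Fin k, M.IsBase ((B i \ {e i}) ∪ {e (i - 1)}) := by
  obtain ⟨n, rfl⟩ : ∃ n, k = n + 1 := ⟨k - 1, (Nat.succ_pred_eq_of_pos (NeZero.pos k)).symm⟩
  have h₀ : M.IsBase (insert e₁ (B 0 \ {e₁})) := by
    rw [insert_sdiff_singleton, insert_eq_of_mem he₁]; exact hB 0
  obtain ⟨x, hx₀, hx⟩ := exists_exchange_seq h₀ (fun h ↦ h.2 rfl)
    (fun m : ℕ ↦ B m) (fun m ↦ hB m)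
  have hpred : ∀ i : Fin (n + 1), i ≠ 0 → (i - 1 : Fin (n + 1)).val + 1 = i.val := by
    intro i hi
    have := Fin.pos_of_ne_zero hi
    rw [Fin.coe_sub_one, if_neg hi]; omega
  refine ⟨fun i ↦ x i, hx₀, fun i ↦ ?_, fun i ↦ ?_⟩
  · rcases eq_or_ne i 0 with rfl | hi
    · simpa [hx₀] using he₁
    · simpa [← hpred i hi] using (hx (i - 1)).2.1
  · rw [union_singleton]
    rcases eq_or_ne i 0 with rfl | hi
    · simpa [hx₀, Fin.coe_sub_one] using (hx n).1
    · simpa [← hpred i hi] using (hx (i - 1)).2.2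

/-- **Single-element cyclic exchange property.**
For every positive integer `k`, every (finite) matroid `M`, every collection of bases
`B 0, …, B (k-1)` of `M`, and every element `e₁ ∈ B 0`, there exist elements
`e i ∈ B i` with `e 0 = e₁` such that for every `i` (indices cyclic mod `k`),
the set `(B i \ {e i}) ∪ {e (i-1)}` is a basis of `M`. -/
theorem single_cyclic_exchange {α : Type*} {k : ℕ} [NeZero k]
    (M : Matroid α) (hM : M.Finite)
    (B : Fin k → Set α) (hB : ∀ i, M.IsBase (B i))
    (e₁ : α) (he₁ : e₁ ∈ B 0) :
    ∃ e : Fin k → α, e 0 = e₁ ∧ (∀ i, e i ∈ B i) ∧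
      ∀ i : Fin k, M.IsBase ((B i \ {e i}) ∪ {e (i - 1)}) :=
  single_cyclic_exchange_general M B hB e₁ he₁
end

section
/- Let M be a matroid with rank function r, let B₁, …, B_k (k ≥ 2) be pairwise disjoint bases of M, and let A₁ ⊆ B₁. Define C₁ = B_k ∪ (B₁ \ A₁), C₂ = A₁ ∪ B₂, and C_i = B_{i−1} ∪ B_i for i = 3, …, k. Then for every subset A ⊆ B₁ ∪ ⋯ ∪ B_k, the inequality r(A ∩ C₁) + r(A ∩ C₂) + ⋯ + r(A ∩ C_k) ≥ |A| holds. -/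
/-!
List the sets `A ∩ C i` in the cyclic order `C 1, C 2, …, C (k-1), C 0`: each pair of consecutive
sets shares the independent set `A ∩ B i` (`i ≠ 0`), so repeated submodularity bounds the sum of
their ranks below by the rank of their union plus `∑_{i ≠ 0} |A ∩ B i|`. The union contains the
independent set `A ∩ B 0 ⊆ (A ∩ C 0) ∪ (A ∩ C 1)`, and `|A| ≤ ∑ |A ∩ B i|`.
-/

noncomputable def matroidRank {α : Type*} (M : Matroid α) (S : Set α) : ℕ :=
  sSup {n : ℕ | ∃ I : Set α, I ⊆ S ∧ M.Indep I ∧ I.ncard = n}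

open Set

theorem Fin.two_le_val_of_ne_zero_of_ne_one {k : ℕ} [NeZero k] {i : Fin k} (h0 : i ≠ 0)
    (h1 : i ≠ 1) : 2 ≤ (i : ℕ) := by
  rw [Ne, Fin.ext_iff, Fin.val_zero] at h0
  rw [Ne, Fin.ext_iff, Fin.val_one'] at h1
  have hk : 1 < k := by omega
  rw [Nat.mod_eq_of_lt hk] at h1
  omega

namespace Matroid

variable {α : Type*} {M : Matroid α}

theorem matroidRank_eq_eRk {X : Set α} (hX : X.Finite) :
    (matroidRank M X : ℕ∞) = M.eRk X := by
  obtain ⟨I, hI⟩ := M.exists_isBasis' X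
  have hIfin : I.Finite := hX.subset hI.subset
  suffices matroidRank M X = I.ncard by rw [this, hIfin.cast_ncard_eq, hI.eRk_eq_encard]
  refine IsGreatest.csSup_eq ⟨⟨I, hI.subset, hI.indep, rfl⟩, ?_⟩
  rintro _ ⟨J, hJX, hJ, rfl⟩
  rw [← Nat.cast_le (α := ℕ∞), (hX.subset hJX).cast_ncard_eq, hIfin.cast_ncard_eq,
    ← hI.eRk_eq_encard]
  exact hJ.encard_le_eRk_of_subset hJX

theorem eRk_iUnion_add_sum_le_sum {n : ℕ} (X : Fin (n + 1) → Set α) (Y : Fin n → Set α)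
    (hY : ∀ j, Y j ⊆ X j.castSucc ∩ X j.succ) :
    M.eRk (⋃ i, X i) + ∑ j, M.eRk (Y j) ≤ ∑ i, M.eRk (X i) := by
  induction n with
  | zero => simp [iUnion_fin_add_one_eq_iUnion_castSucc]
  | succ n ih =>
    have hU := ih (X ∘ Fin.castSucc) (Y ∘ Fin.castSucc) fun j ↦ by
      have := hY j.castSucc
      rwa [Fin.succ_castSucc] at this
    have hYU : Y (Fin.last n) ⊆ iUnion (X ∘ Fin.castSucc) ∩ X (Fin.last (n + 1)) :=
      (hY _).trans (inter_subset_inter_left _ (subset_iUnion (X ∘ Fin.castSucc) _))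
    rw [iUnion_fin_add_one_eq_iUnion_castSucc, Fin.sum_univ_castSucc, Fin.sum_univ_castSucc]
    generalize iUnion (X ∘ Fin.castSucc) = U at hU hYU ⊢
    set Xl := X (Fin.last (n + 1))
    set S := ∑ j, M.eRk (Y (Fin.castSucc j))
    calc M.eRk (U ∪ Xl) + (S + M.eRk (Y (Fin.last n)))
        ≤ M.eRk (U ∪ Xl) + (S + M.eRk (U ∩ Xl)) := by
          gcongr
          exact M.eRk_mono hYU
      _ = (M.eRk (U ∩ Xl) + M.eRk (U ∪ Xl)) + S := by ring
      _ ≤ (M.eRk U + M.eRk Xl) + S := add_le_add (M.eRk_submod U Xl) le_rfl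
      _ = (M.eRk U + S) + M.eRk Xl := by ring
      _ ≤ ∑ i, M.eRk (X (Fin.castSucc i)) + M.eRk Xl := by
          gcongr
          exact hU

theorem encard_iUnion_le_sum_eRk_of_cyclic {n : ℕ} {I X : Fin (n + 1) → Set α}
    (hI : ∀ i, M.Indep (I i)) (hIX : ∀ i ≠ 0, I i ⊆ X i) (hIX' : ∀ i ≠ 0, I i ⊆ X (i + 1))
    (hI0 : I 0 ⊆ X 0 ∪ X 1) :
    (⋃ i, I i).encard ≤ ∑ i, M.eRk (X i) := by
  have hX01 : X 0 ∪ X 1 ⊆ ⋃ j, X (j + 1) := by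
    refine union_subset ?_ (subset_iUnion_of_subset 0 (by rw [zero_add]))
    exact subset_iUnion_of_subset (.last n) (by rw [Fin.last_add_one])
  calc (⋃ i, I i).encard ≤ ∑ i, (I i).encard := encard_iUnion_le_of_fintype I
    _ = (I 0).encard + ∑ j : Fin n, M.eRk (I j.succ) := by
        simp only [Fin.sum_univ_succ, (hI _).eRk_eq_encard]
    _ ≤ M.eRk (⋃ j, X (j + 1)) + ∑ j : Fin n, M.eRk (I j.succ) := by
        gcongr
        exact (hI 0).encard_le_eRk_of_subset (hI0.trans hX01)
    _ ≤ ∑ j, M.eRk (X (j + 1)) :=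
        eRk_iUnion_add_sum_le_sum _ _ fun j ↦ subset_inter
          (by rw [Fin.coeSucc_eq_succ]; exact hIX _ j.succ_ne_zero) (hIX' _ j.succ_ne_zero)
    _ = ∑ i, M.eRk (X i) := Fintype.sum_equiv (Equiv.addRight 1) _ _ fun _ ↦ rfl

end Matroid

theorem rank_sum_inequality_general {α : Type*} {k : ℕ} [NeZero k]
    (M : Matroid α)
    (B : Fin k → Set α) (hB : ∀ i, M.IsBase (B i))
    (A₁ : Set α)
    (C : Fin k → Set α)
    (hC0 : C 0 = B (0 - 1) ∪ (B 0 \ A₁))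
    (hC1 : C 1 = A₁ ∪ B 1)
    (hCi : ∀ i : Fin k, 2 ≤ (i : ℕ) → C i = B (i - 1) ∪ B i)
    (A : Set α) (hA : A ⊆ ⋃ i, B i) :
    A.ncard ≤ ∑ i : Fin k, matroidRank M (A ∩ C i) := by
  obtain hAinf | hAfin := A.infinite_or_finite
  · simp [hAinf.ncard]
  have hBC : ∀ i ≠ 0, B i ⊆ C i := fun i hi ↦ by
    obtain rfl | hi1 := eq_or_ne i 1
    · exact hC1 ▸ subset_union_right
    · exact hCi i (Fin.two_le_val_of_ne_zero_of_ne_one hi hi1) ▸ subset_union_right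
  have hBC' : ∀ i ≠ 0, B i ⊆ C (i + 1) := fun i hi ↦ by
    obtain hi0 | hi0 := eq_or_ne (i + 1) 0
    · rw [hi0, hC0, ← hi0, add_sub_cancel_right]
      exact subset_union_left
    · rw [hCi _ (Fin.two_le_val_of_ne_zero_of_ne_one hi0 (by simpa using hi)),
        add_sub_cancel_right]
      exact subset_union_left
  have hB0 : B 0 ⊆ C 0 ∪ C 1 := by
    rw [hC0, hC1]
    intro x hx
    by_cases hxA : x ∈ A₁ <;> simp [hx, hxA]
  obtain ⟨n, rfl⟩ := Nat.exists_eq_succ_of_ne_zero (NeZero.ne k)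
  rw [← Nat.cast_le (α := ℕ∞), hAfin.cast_ncard_eq, Nat.cast_sum]
  simp only [Matroid.matroidRank_eq_eRk (hAfin.subset inter_subset_left)]
  calc A.encard = (⋃ i, A ∩ B i).encard := by rw [← inter_iUnion, inter_eq_left.2 hA]
    _ ≤ ∑ i, M.eRk (A ∩ C i) :=
      Matroid.encard_iUnion_le_sum_eRk_of_cyclic (fun i ↦ (hB i).indep.subset inter_subset_right)
        (fun i hi ↦ inter_subset_inter_right A (hBC i hi))
        (fun i hi ↦ inter_subset_inter_right A (hBC' i hi))
        (by rw [← inter_union_distrib_left]; exact inter_subset_inter_right A hB0)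

/-- Let `B 0, …, B (k-1)` (`k ≥ 2`) be pairwise disjoint bases of a finite matroid `M`,
and `A₁ ⊆ B 0`.  With `C 0 = B (k-1) ∪ (B 0 \ A₁)`, `C 1 = A₁ ∪ B 1`, and
`C i = B (i-1) ∪ B i` for `i ≥ 2`, every `A ⊆ B 0 ∪ ⋯ ∪ B (k-1)` satisfies
`r (A ∩ C 0) + ⋯ + r (A ∩ C (k-1)) ≥ |A|`. -/
theorem rank_sum_inequality {α : Type*} {k : ℕ} [NeZero k] (hk : 2 ≤ k)
    (M : Matroid α) (hM : M.Finite)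
    (B : Fin k → Set α) (hB : ∀ i, M.IsBase (B i))
    (hdisj : ∀ i j : Fin k, i ≠ j → Disjoint (B i) (B j))
    (A₁ : Set α) (hA₁ : A₁ ⊆ B 0)
    (C : Fin k → Set α)
    (hC0 : C 0 = B (0 - 1) ∪ (B 0 \ A₁))
    (hC1 : C 1 = A₁ ∪ B 1)
    (hCi : ∀ i : Fin k, 2 ≤ (i : ℕ) → C i = B (i - 1) ∪ B i)
    (A : Set α) (hA : A ⊆ ⋃ i, B i) :
    A.ncard ≤ ∑ i : Fin k, matroidRank M (A ∩ C i) :=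
  rank_sum_inequality_general M B hB A₁ C hC0 hC1 hCi A hA
end
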